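/- Let L be an integral ℓ-monoid, let α be a fuzzy regular expression over a finite alphabet X with associated alphabet Y, let A = (A, X∪Y, δ^A, a₀, τ^A) be an arbitrary nondeterministic finite automaton recognizing ‖α_R‖, and let A_α be the fuzzy automaton associated with A and α. Then δ^{A_α}_x = R_A∘δ^A_x∘R_A for every x ∈ X, and τ^{A_α} = R_A∘τ^A. -/
import Mathlib


attribute [local instance] Classical.propDecidable

/-- A lattice-ordered monoid (ℓ-monoid): a lattice with least element `⊥` and greatest
element `⊤`, together with a monoid structure (multiplication `*`, unit `1`, playing the
role of `e`) such that `⊥` (playing the role of the scalar `0`) is absorbing and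
multiplication distributes over binary joins on both sides. -/
class LMonoid (L : Type*) extends Lattice L, BoundedOrder L, Monoid L where
  mul_bot : ∀ x : L, x * ⊥ = ⊥
  bot_mul : ∀ x : L, ⊥ * x = ⊥
  mul_sup : ∀ x y z : L, x * (y ⊔ z) = x * y ⊔ x * z
  sup_mul : ∀ x y z : L, (x ⊔ y) * z = x * z ⊔ y * z

/-- An integral ℓ-monoid: the unit of the multiplication is the top element of the lattice. -/
class IntegralLMonoid (L : Type*) extends LMonoid L where
  one_eq_top : (1 : L) = ⊤

/-- Fuzzy regular expressions over an alphabet `X` with scalars in `L`. -/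
inductive FRE (X L : Type*) where
  | zero : FRE X L
  | eps : FRE X L
  | char : X → FRE X L
  | smul : L → FRE X L → FRE X L
  | plus : FRE X L → FRE X L → FRE X L
  | comp : FRE X L → FRE X L → FRE X L
  | star : FRE X L → FRE X L

/-- The set of scalars of `L` occurring in a fuzzy regular expression. -/
def FRE.scalars {X L : Type*} : FRE X L → Set L
  | .zero => ∅
  | .eps => ∅
  | .char _ => ∅
  | .smul lam β => insert lam β.scalars
  | .plus β γ => β.scalars ∪ γ.scalars
  | .comp β γ => β.scalars ∪ γ.scalars
  | .star β => β.scalars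

noncomputable section

namespace Fz

variable {L : Type*} [IntegralLMonoid L]

/-- Composition of fuzzy relations: `(R ∘ S)(a,b) = ⋁_{c} R(a,c) ⊗ S(c,b)`. -/
def fcomp {A : Type*} [Fintype A] (R S : A → A → L) : A → A → L :=
  fun a b => Finset.univ.sup fun c => R a c * S c b

/-- Composition of a fuzzy relation with a fuzzy set: `(R ∘ f)(a) = ⋁_{b} R(a,b) ⊗ f(b)`. -/
def fcompf {A : Type*} [Fintype A] (R : A → A → L) (f : A → L) : A → L :=
  fun a => Finset.univ.sup fun b => R a b * f b

/-- Composition of a fuzzy set with a fuzzy relation: `(f ∘ R)(a) = ⋁_{b} f(b) ⊗ R(b,a)`. -/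
def fcompfR {A : Type*} [Fintype A] (f : A → L) (R : A → A → L) : A → L :=
  fun a => Finset.univ.sup fun b => f b * R b a

/-- Powers of a fuzzy relation: `R⁰` is the crisp equality and `R^{k+1} = R^k ∘ R`. -/
def rpow {A : Type*} [Fintype A] (R : A → A → L) : ℕ → A → A → L
  | 0 => fun a b => if a = b then 1 else ⊥
  | k + 1 => fcomp (rpow R k) R

private def dstarAux {A Z : Type*} [Fintype A] (δ : A → Z → A → L) : A → List Z → A → L
  | a, [], b => if a = b then 1 else ⊥
  | a, z :: w, b => Finset.univ.sup fun c => dstarAux δ a w c * δ c z b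

/-- The extension of a fuzzy transition relation to words:
`δ(a, ε, b) = 1` if `a = b` and `⊥` otherwise, and
`δ(a, ux, b) = ⋁_{c} δ(a, u, c) ⊗ δ(c, x, b)`. -/
def dstar {A Z : Type*} [Fintype A] (δ : A → Z → A → L) (a : A) (w : List Z) (b : A) : L :=
  dstarAux δ a w.reverse b

/-- Fuzzy language recognized by a fuzzy automaton with a single crisp initial state `a0`:
`L(A)(u) = ⋁_{b} δ(a0, u, b) ⊗ τ(b)`. -/
def lang {A Z : Type*} [Fintype A] (δ : A → Z → A → L) (a0 : A) (τ : A → L)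
    (w : List Z) : L :=
  Finset.univ.sup fun b => dstar δ a0 w b * τ b

/-- Concatenation of fuzzy languages: `(fg)(u) = ⋁_{u = vw} f(v) ⊗ g(w)`
(a finite join over the factorizations of `u`). -/
def fconcat {X : Type*} (f g : List X → L) : List X → L :=
  fun u => (Finset.range (u.length + 1)).sup fun i => f (u.take i) * g (u.drop i)

/-- Powers of a fuzzy language: `f⁰` is the characteristic function of the empty word,
and `f^{n+1} = fⁿ f`. -/
def fpow {X : Type*} (f : List X → L) : ℕ → List X → L
  | 0 => fun u => if u = [] then 1 else ⊥
  | n + 1 => fconcat (fpow f n) f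

/-- `IsNorm α f` asserts that `f` is the fuzzy language `‖α‖` represented by the fuzzy
regular expression `α` (for the star, `‖β*‖(u)` is the least upper bound of the powers,
which is required to exist). -/
inductive IsNorm {X : Type*} : FRE X L → (List X → L) → Prop
  | zero : IsNorm .zero fun _ => ⊥
  | eps : IsNorm .eps fun u => if u = [] then 1 else ⊥
  | char (x : X) : IsNorm (.char x) fun u => if u = [x] then 1 else ⊥
  | smul (lam : L) {β : FRE X L} {f : List X → L} :
      IsNorm β f → IsNorm (.smul lam β) fun u => lam * f u
  | plus {β γ : FRE X L} {f g : List X → L} :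
      IsNorm β f → IsNorm γ g → IsNorm (.plus β γ) fun u => f u ⊔ g u
  | comp {β γ : FRE X L} {f g : List X → L} :
      IsNorm β f → IsNorm γ g → IsNorm (.comp β γ) (fconcat f g)
  | star {β : FRE X L} {f g : List X → L} :
      IsNorm β f → (∀ u, IsLUB {l | ∃ n : ℕ, l = fpow f n u} (g u)) →
      IsNorm (.star β) g

/-- The ordinary regular expression `α_R` over `X ∪ Y` obtained from a fuzzy regular
expression `α` by replacing each scalar `λ` by the associated letter `λ' = sc λ ∈ Y`. -/
def toReg {X Y : Type*} (sc : L → Y) : FRE X L → RegularExpression (X ⊕ Y)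
  | .zero => 0
  | .eps => 1
  | .char x => RegularExpression.char (Sum.inl x)
  | .smul lam β => RegularExpression.char (Sum.inr (sc lam)) * toReg sc β
  | .plus β γ => toReg sc β + toReg sc γ
  | .comp β γ => toReg sc β * toReg sc γ
  | .star β => (toReg sc β).star

/-- `U_Y(u)`: the set of words over `X ∪ Y` from which deleting all letters of `Y`
yields `u` (the shuffle of `u` with `Y*`). -/
def UY {X : Type*} (Y : Type*) (u : List X) : Set (List (X ⊕ Y)) :=
  {v | v.filterMap (fun z => z.getLeft?) = u}

/-- The homomorphism `φ*_α : (X ∪ Y)* → (L, ⊗, 1)` determined by mapping every letter of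
`X` to `1` and every letter `λ' ∈ Y` to the corresponding scalar `λ = φY λ'`. -/
def phiStar {X Y : Type*} (φY : Y → L) (v : List (X ⊕ Y)) : L :=
  (v.map (Sum.elim (fun _ => (1 : L)) φY)).prod

/-- The language `‖α_R‖` of the regular expression `α_R`, viewed as a fuzzy language
with membership values in `{0, 1} ⊆ L`. -/
def langR {X Y : Type*} (sc : L → Y) (α : FRE X L) (v : List (X ⊕ Y)) : L :=
  if v ∈ (toReg sc α).matches' then 1 else ⊥

/-- The reflexive fuzzy relation `R` on the state set of a nondeterministic automaton over
`X ∪ Y`: `R(a,a) = 1` and, for `a ≠ b`, `R(a,b) = ⋁_{λ' ∈ Y} λ ⊗ δ(a, λ', b)`. -/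
def Rstep {X Y A : Type*} [Fintype A] [Fintype Y] (φY : Y → L)
    (δ : A → X ⊕ Y → A → L) : A → A → L :=
  fun a b => if a = b then 1 else Finset.univ.sup fun y : Y => φY y * δ a (Sum.inr y) b

/-- The fuzzy relation `R_A = Rⁿ`, `n = |A|`: the least transitive fuzzy relation
containing `R`. -/
def RA {X Y A : Type*} [Fintype A] [Fintype Y] (φY : Y → L)
    (δ : A → X ⊕ Y → A → L) : A → A → L :=
  rpow (Rstep φY δ) (Fintype.card A)

/-- The set `{φ*_α(v) ⊗ δ^A(a,v,b) : v ∈ U_Y(x)}` whose least upper bound defines the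
transition `δ^{A_α}(a, x, b)` of the fuzzy automaton associated with `A` and `α`. -/
def dset {X Y A : Type*} [Fintype A] (φY : Y → L) (δ : A → X ⊕ Y → A → L)
    (a : A) (x : X) (b : A) : Set L :=
  {l | ∃ v ∈ UY Y [x], l = phiStar φY v * dstar δ a v b}

/-- The set `{⋁_{b} φ*_α(v) ⊗ δ^A(a,v,b) ⊗ τ(b) : v ∈ Y*}` whose least upper bound defines
the terminal degree `τ^{A_α}(a)` of the fuzzy automaton associated with `A` and `α`. -/
def tset {X Y A : Type*} [Fintype A] (φY : Y → L) (δ : A → X ⊕ Y → A → L)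
    (τ : A → L) (a : A) : Set L :=
  {l | ∃ w : List Y, l = Finset.univ.sup fun b =>
    phiStar φY ((w.map Sum.inr : List (X ⊕ Y))) *
      dstar δ a (w.map Sum.inr) b * τ b}

end Fz

end

noncomputable section
namespace FzAux
open Fz

variable {L : Type*} [IntegralLMonoid L]

lemma le_one' (x : L) : x ≤ 1 := by
  rw [IntegralLMonoid.one_eq_top]; exact le_top

lemma mul_le_mul_left'' {a b : L} (h : a ≤ b) (c : L) : a * c ≤ b * c := by
  have h2 := LMonoid.sup_mul a b c
  rw [sup_eq_right.mpr h] at h2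
  rw [h2]; exact le_sup_left

lemma mul_le_mul_right'' {a b : L} (h : a ≤ b) (c : L) : c * a ≤ c * b := by
  have h2 := LMonoid.mul_sup c a b
  rw [sup_eq_right.mpr h] at h2
  rw [h2]; exact le_sup_left

lemma mul_le_mul4 {a b c d : L} (h1 : a ≤ b) (h2 : c ≤ d) : a * c ≤ b * d :=
  le_trans (mul_le_mul_left'' h1 c) (mul_le_mul_right'' h2 b)

lemma mul_supFin {I : Type*} (c : L) (s : Finset I) (f : I → L) :
    c * s.sup f = s.sup fun i => c * f i := by
  induction s using Finset.cons_induction with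
  | empty => simp [LMonoid.mul_bot]
  | cons i s hi ih => simp [Finset.sup_cons, LMonoid.mul_sup, ih]

lemma supFin_mul {I : Type*} (c : L) (s : Finset I) (f : I → L) :
    s.sup f * c = s.sup fun i => f i * c := by
  induction s using Finset.cons_induction with
  | empty => simp [LMonoid.bot_mul]
  | cons i s hi ih => simp [Finset.sup_cons, LMonoid.sup_mul, ih]

def Crisp (c : L) : Prop := c = 1 ∨ c = ⊥

lemma crisp_mul {a b : L} (ha : Crisp a) (hb : Crisp b) : Crisp (a * b) := by
  rcases ha with h | h <;> rcases hb with h' | h' <;>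
    simp [Crisp, h, h', LMonoid.mul_bot, LMonoid.bot_mul]

lemma crisp_sup {a b : L} (ha : Crisp a) (hb : Crisp b) : Crisp (a ⊔ b) := by
  rcases ha with h | h <;> rcases hb with h' | h' <;> simp [Crisp, h, h']

lemma crisp_supFin {I : Type*} (s : Finset I) (f : I → L) (h : ∀ i, Crisp (f i)) :
    Crisp (s.sup f) := by
  induction s using Finset.cons_induction with
  | empty => exact Or.inr Finset.sup_empty
  | cons i s hi ih => rw [Finset.sup_cons]; exact crisp_sup (h i) ih

lemma crisp_ite {p : Prop} [Decidable p] : Crisp (if p then (1 : L) else ⊥) := by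
  split
  · exact Or.inl rfl
  · exact Or.inr rfl

section Dstar
variable {A Z : Type*} [Fintype A]

lemma sup_ite_left (g : A → L) (a : A) :
    (Finset.univ.sup fun c => (if a = c then (1 : L) else ⊥) * g c) = g a := by
  apply le_antisymm
  · refine Finset.sup_le fun c _ => ?_
    by_cases h : a = c
    · subst h; simp
    · simp [h, LMonoid.bot_mul]
  · simpa using Finset.le_sup (f := fun c => (if a = c then (1 : L) else ⊥) * g c)
      (Finset.mem_univ a)

lemma sup_ite_right (g : A → L) (b : A) :
    (Finset.univ.sup fun c => g c * (if c = b then (1 : L) else ⊥)) = g b := by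
  apply le_antisymm
  · refine Finset.sup_le fun c _ => ?_
    by_cases h : c = b
    · subst h; simp
    · simp [h, LMonoid.mul_bot]
  · simpa using Finset.le_sup (f := fun c => g c * (if c = b then (1 : L) else ⊥))
      (Finset.mem_univ b)

lemma dstar_nil (δ : A → Z → A → L) (a b : A) :
    dstar δ a [] b = if a = b then 1 else ⊥ := rfl

lemma dstar_snoc (δ : A → Z → A → L) (a b : A) (w : List Z) (z : Z) :
    dstar δ a (w ++ [z]) b = Finset.univ.sup fun c => dstar δ a w c * δ c z b := by
  simp [dstar, List.reverse_append, dstarAux]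

lemma dstar_append (δ : A → Z → A → L) (a b : A) (u v : List Z) :
    dstar δ a (u ++ v) b = Finset.univ.sup fun c => dstar δ a u c * dstar δ c v b := by
  induction v using List.reverseRecOn generalizing b with
  | nil => simp only [List.append_nil, dstar_nil, sup_ite_right]
  | append_singleton v z ih =>
    rw [← List.append_assoc, dstar_snoc]
    calc (Finset.univ.sup fun d => dstar δ a (u ++ v) d * δ d z b)
        = Finset.univ.sup fun d => Finset.univ.sup fun c =>
            (dstar δ a u c * dstar δ c v d) * δ d z b := by
          refine Finset.sup_congr rfl fun d _ => ?_
          rw [ih, supFin_mul]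
      _ = Finset.univ.sup fun c => Finset.univ.sup fun d =>
            (dstar δ a u c * dstar δ c v d) * δ d z b := Finset.sup_comm _ _ _
      _ = Finset.univ.sup fun c => dstar δ a u c * dstar δ c (v ++ [z]) b := by
          refine Finset.sup_congr rfl fun c _ => ?_
          rw [dstar_snoc, mul_supFin]
          exact Finset.sup_congr rfl fun d _ => mul_assoc _ _ _

lemma dstar_single (δ : A → Z → A → L) (a c : A) (z : Z) :
    dstar δ a [z] c = δ a z c := by
  rw [show ([z] : List Z) = [] ++ [z] from rfl, dstar_snoc]
  simp only [dstar_nil]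
  exact sup_ite_left (fun e => δ e z c) a

lemma dstar_cons (δ : A → Z → A → L) (a b : A) (z : Z) (w : List Z) :
    dstar δ a (z :: w) b = Finset.univ.sup fun c => δ a z c * dstar δ c w b := by
  rw [show z :: w = [z] ++ w from rfl, dstar_append]
  exact Finset.sup_congr rfl fun c _ => by rw [dstar_single]

lemma crisp_dstar {δ : A → Z → A → L} (hδ : ∀ a z b, δ a z b = 1 ∨ δ a z b = ⊥)
    (a : A) (w : List Z) : ∀ b, Crisp (dstar δ a w b) := by
  induction w using List.reverseRecOn with
  | nil => intro b; rw [dstar_nil]; exact crisp_ite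
  | append_singleton w z ih =>
    intro b
    rw [dstar_snoc]
    exact crisp_supFin _ _ fun c => crisp_mul (ih c) (hδ c z b)

end Dstar

section Phi
variable {X Y : Type*}

lemma phiStar_nil (φY : Y → L) : phiStar (X := X) φY [] = 1 := rfl

lemma phiStar_append (φY : Y → L) (u v : List (X ⊕ Y)) :
    phiStar φY (u ++ v) = phiStar φY u * phiStar φY v := by
  simp [phiStar]

lemma phiStar_cons_inl (φY : Y → L) (x : X) (v : List (X ⊕ Y)) :
    phiStar φY (Sum.inl x :: v) = phiStar φY v := by
  simp [phiStar]

lemma phiStar_cons_inr (φY : Y → L) (y : Y) (v : List (X ⊕ Y)) :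
    phiStar φY (Sum.inr y :: v) = φY y * phiStar φY v := by
  simp [phiStar]

lemma phiStar_single_inr (φY : Y → L) (y : Y) :
    phiStar (X := X) φY [Sum.inr y] = φY y := by
  simp [phiStar]

lemma filterMap_getLeft_eq_nil {v : List (X ⊕ Y)}
    (h : v.filterMap (fun z => z.getLeft?) = []) : ∃ w : List Y, v = w.map Sum.inr := by
  induction v with
  | nil => exact ⟨[], rfl⟩
  | cons z v ih =>
    cases z with
    | inl x => simp [List.filterMap_cons] at h
    | inr y =>
      rw [List.filterMap_cons] at h
      simp only [Sum.getLeft?_inr] at h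
      obtain ⟨w, rfl⟩ := ih h
      exact ⟨y :: w, rfl⟩

lemma mem_UY_singleton {x : X} {v : List (X ⊕ Y)} :
    v ∈ UY Y [x] ↔ ∃ w₁ w₂ : List Y,
      v = w₁.map Sum.inr ++ Sum.inl x :: w₂.map Sum.inr := by
  constructor
  · intro h
    simp only [UY, Set.mem_setOf_eq] at h
    induction v with
    | nil => simp at h
    | cons z v ih =>
      cases z with
      | inl x' =>
        rw [List.filterMap_cons] at h
        simp only [Sum.getLeft?_inl] at h
        rw [List.cons_eq_cons] at h
        obtain ⟨rfl, h2⟩ := h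
        obtain ⟨w₂, rfl⟩ := filterMap_getLeft_eq_nil h2
        exact ⟨[], w₂, rfl⟩
      | inr y =>
        rw [List.filterMap_cons] at h
        simp only [Sum.getLeft?_inr] at h
        obtain ⟨w₁, w₂, rfl⟩ := ih h
        exact ⟨y :: w₁, w₂, rfl⟩
  · rintro ⟨w₁, w₂, rfl⟩
    have hnil : ∀ w : List Y,
        List.filterMap ((fun z : X ⊕ Y => z.getLeft?) ∘ Sum.inr) w = [] := by
      intro w
      induction w with
      | nil => rfl
      | cons y w ih => simp [List.filterMap_cons, ih]
    simp [UY, List.filterMap_append, List.filterMap_cons, List.filterMap_map, hnil]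

end Phi

section Paths
variable {A : Type*} [Fintype A]

lemma rpow_succ (R : A → A → L) (k : ℕ) (a b : A) :
    rpow R (k + 1) a b = Finset.univ.sup fun c => rpow R k a c * R c b := rfl

lemma rpow_zero' (R : A → A → L) (a b : A) :
    rpow R 0 a b = if a = b then 1 else ⊥ := rfl

def pathSup (R : A → A → L) : ℕ → A → A → L
  | 0 => R
  | k + 1 => fun a b => Finset.univ.sup fun c => R a c * pathSup R k c b

def pathVal (R : A → A → L) : A → List A → A → L
  | a, [], b => R a b
  | a, c :: cs, b => R a c * pathVal R c cs b

variable {R : A → A → L}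

lemma rpow_le_succ (hrefl : ∀ a, R a a = 1) (k : ℕ) (a b : A) :
    rpow R k a b ≤ rpow R (k + 1) a b := by
  rw [rpow_succ]
  calc rpow R k a b = rpow R k a b * R b b := by rw [hrefl, mul_one]
    _ ≤ _ := Finset.le_sup (f := fun c => rpow R k a c * R c b) (Finset.mem_univ b)

lemma rpow_mono (hrefl : ∀ a, R a a = 1) {k m : ℕ} (h : k ≤ m) (a b : A) :
    rpow R k a b ≤ rpow R m a b := by
  induction m, h using Nat.le_induction with
  | base => exact le_rfl
  | succ m hm ih => exact ih.trans (rpow_le_succ hrefl m a b)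

lemma pathSup_succ_right (R : A → A → L) (k : ℕ) (a b : A) :
    pathSup R (k + 1) a b = Finset.univ.sup fun c => pathSup R k a c * R c b := by
  induction k generalizing a with
  | zero => rfl
  | succ k ih =>
    show (Finset.univ.sup fun c => R a c * pathSup R (k + 1) c b) = _
    calc (Finset.univ.sup fun c => R a c * pathSup R (k + 1) c b)
        = Finset.univ.sup fun c => Finset.univ.sup fun d =>
            (R a c * pathSup R k c d) * R d b := by
          refine Finset.sup_congr rfl fun c _ => ?_
          rw [ih, mul_supFin]
          exact Finset.sup_congr rfl fun d _ => (mul_assoc _ _ _).symm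
      _ = Finset.univ.sup fun d => Finset.univ.sup fun c =>
            (R a c * pathSup R k c d) * R d b := Finset.sup_comm _ _ _
      _ = _ := by
          refine Finset.sup_congr rfl fun d _ => ?_
          rw [show pathSup R (k + 1) a d
              = Finset.univ.sup fun c => R a c * pathSup R k c d from rfl, supFin_mul]

lemma rpow_eq_pathSup (R : A → A → L) (k : ℕ) (a b : A) :
    rpow R (k + 1) a b = pathSup R k a b := by
  induction k generalizing b with
  | zero =>
    rw [rpow_succ]
    show (Finset.univ.sup fun c => (if a = c then (1 : L) else ⊥) * R c b) = R a b
    exact sup_ite_left (fun c => R c b) a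
  | succ k ih =>
    rw [rpow_succ, pathSup_succ_right]
    exact Finset.sup_congr rfl fun c _ => by rw [ih]

lemma pathVal_append (R : A → A → L) (a b c : A) (p q : List A) :
    pathVal R a (p ++ c :: q) b = pathVal R a p c * pathVal R c q b := by
  induction p generalizing a with
  | nil => rfl
  | cons d p ih =>
    show R a d * pathVal R d (p ++ c :: q) b = (R a d * pathVal R d p c) * pathVal R c q b
    rw [ih, mul_assoc]

lemma pathVal_le_pathSup (R : A → A → L) (a b : A) (cs : List A) :
    pathVal R a cs b ≤ pathSup R cs.length a b := by
  induction cs generalizing a with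
  | nil => exact le_rfl
  | cons c cs ih =>
    show R a c * pathVal R c cs b ≤ Finset.univ.sup fun d => R a d * pathSup R cs.length d b
    exact le_trans (mul_le_mul_right'' (ih c) (R a c))
      (Finset.le_sup (f := fun d => R a d * pathSup R cs.length d b) (Finset.mem_univ c))

lemma pathSup_le_succ (hrefl : ∀ a, R a a = 1) (k : ℕ) (a b : A) :
    pathSup R k a b ≤ pathSup R (k + 1) a b := by
  calc pathSup R k a b = R a a * pathSup R k a b := by rw [hrefl, one_mul]
    _ ≤ _ := Finset.le_sup (f := fun c => R a c * pathSup R k c b) (Finset.mem_univ a)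

lemma pathSup_mono (hrefl : ∀ a, R a a = 1) {k m : ℕ} (h : k ≤ m) (a b : A) :
    pathSup R k a b ≤ pathSup R m a b := by
  induction m, h using Nat.le_induction with
  | base => exact le_rfl
  | succ m hm ih => exact ih.trans (pathSup_le_succ hrefl m a b)

lemma exists_dup_split {α : Type*} {l : List α} (h : ¬ l.Nodup) :
    ∃ (x : α) (p q r : List α), l = p ++ x :: q ++ x :: r := by
  induction l with
  | nil => exact absurd List.nodup_nil h
  | cons a l ih =>
    by_cases ha : a ∈ l
    · obtain ⟨q, r, rfl⟩ := List.append_of_mem ha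
      exact ⟨a, [], q, r, rfl⟩
    · have hl : ¬ l.Nodup := fun hl => h (List.nodup_cons.mpr ⟨ha, hl⟩)
      obtain ⟨x, p, q, r, rfl⟩ := ih hl
      exact ⟨x, a :: p, q, r, rfl⟩

lemma pathVal_le_pathSup_card [Nonempty A] (hrefl : ∀ a, R a a = 1)
    (cs : List A) (a b : A) :
    pathVal R a cs b ≤ pathSup R (Fintype.card A - 1) a b := by
  have hcard : 1 ≤ Fintype.card A := Fintype.card_pos
  suffices main : ∀ n (cs : List A) (a b : A), cs.length ≤ n →
      pathVal R a cs b ≤ pathSup R (Fintype.card A - 1) a b from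
    main cs.length cs a b le_rfl
  intro n
  induction n with
  | zero =>
    intro cs a b hl
    have hcs : cs = [] := List.length_eq_zero_iff.mp (Nat.le_zero.mp hl)
    subst hcs
    exact pathSup_mono hrefl (Nat.zero_le _) a b
  | succ n ih =>
    intro cs a b hl
    by_cases hlen : cs.length + 1 ≤ Fintype.card A
    · exact (pathVal_le_pathSup R a b cs).trans
        (pathSup_mono hrefl (by omega) a b)
    · have hnd : ¬ (a :: cs).Nodup := by
        intro hnod
        have := hnod.length_le_card
        simp only [List.length_cons] at this
        omega
      obtain ⟨x, p, q, r, hsplit⟩ := exists_dup_split hnd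
      cases p with
      | nil =>
        simp only [List.nil_append] at hsplit
        injection hsplit with h1 h2
        subst h1; subst h2
        simp only [List.append_eq] at hl ⊢
        rw [pathVal_append]
        have h1 : pathVal R a q a * pathVal R a r b ≤ pathVal R a r b := by
          calc pathVal R a q a * pathVal R a r b ≤ 1 * pathVal R a r b :=
                mul_le_mul_left'' (le_one' _) _
            _ = pathVal R a r b := one_mul _
        refine h1.trans (ih r a b ?_)
        have := hl
        simp only [List.length_append, List.length_cons] at this
        omega
      | cons a' p =>
        injection hsplit with h1 h2
        subst h1; subst h2
        simp only [List.append_eq] at hl ⊢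
        rw [show p ++ x :: q ++ x :: r = p ++ x :: (q ++ x :: r) from by simp,
          pathVal_append, pathVal_append]
        have h1 : pathVal R a p x * (pathVal R x q x * pathVal R x r b)
            ≤ pathVal R a p x * pathVal R x r b := by
          refine mul_le_mul_right'' ?_ _
          calc pathVal R x q x * pathVal R x r b ≤ 1 * pathVal R x r b :=
                mul_le_mul_left'' (le_one' _) _
            _ = pathVal R x r b := one_mul _
        rw [← pathVal_append R a b x p r] at h1
        refine h1.trans (ih _ a b ?_)
        simp only [List.length_append, List.length_cons] at hl ⊢
        omega

lemma mul_pathSup_mul_le {u : L} (k : ℕ) (a b : A) (e r : L)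
    (h : ∀ cs : List A, e * pathVal R a cs b * r ≤ u) :
    e * pathSup R k a b * r ≤ u := by
  induction k generalizing a e with
  | zero => exact h []
  | succ k ih =>
    show e * (Finset.univ.sup fun c => R a c * pathSup R k c b) * r ≤ u
    rw [mul_supFin, supFin_mul]
    refine Finset.sup_le fun c _ => ?_
    have hc := ih c (e * R a c) (fun cs => by
      have := h (c :: cs)
      simpa [pathVal, mul_assoc] using this)
    simpa [mul_assoc] using hc

end Paths

section Main
variable {X Y A : Type*} [Fintype Y] [Fintype A] (φY : Y → L) (δ : A → X ⊕ Y → A → L)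

lemma rstep_refl (a : A) : Rstep φY δ a a = 1 := if_pos rfl

lemma rstep_ne {a c : A} (h : a ≠ c) :
    Rstep φY δ a c = Finset.univ.sup fun y => φY y * δ a (Sum.inr y) c := if_neg h

lemma phiStar_dstar_le_rpow (hδ : ∀ a z b, δ a z b = 1 ∨ δ a z b = ⊥)
    (w : List Y) (a : A) : ∀ b : A,
    phiStar φY (w.map Sum.inr : List (X ⊕ Y)) * dstar δ a (w.map Sum.inr) b
      ≤ rpow (Rstep φY δ) w.length a b := by
  induction w using List.reverseRecOn with
  | nil =>
    intro b
    rw [List.map_nil, phiStar_nil, one_mul]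
    exact le_rfl
  | append_singleton w y ih =>
    intro b
    rw [List.map_append, List.map_cons, List.map_nil, phiStar_append, dstar_snoc,
      phiStar_single_inr, mul_supFin]
    have hlen : (w ++ [y]).length = w.length + 1 := by simp
    rw [hlen, rpow_succ]
    refine Finset.sup_le fun c _ => ?_
    refine le_trans ?_ (Finset.le_sup
      (f := fun c => rpow (Rstep φY δ) w.length a c * Rstep φY δ c b) (Finset.mem_univ c))
    rcases crisp_dstar hδ a (w.map Sum.inr) c with h1 | h1
    · rcases hδ c (Sum.inr y) b with h2 | h2
      · have hP : phiStar φY (w.map Sum.inr : List (X ⊕ Y)) ≤ rpow (Rstep φY δ) w.length a c := by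
          have := ih c
          rwa [h1, mul_one] at this
        have hy : φY y ≤ Rstep φY δ c b := by
          by_cases hcb : c = b
          · subst hcb; rw [rstep_refl]; exact le_one' _
          · rw [rstep_ne φY δ hcb]
            refine le_trans ?_ (Finset.le_sup
              (f := fun y' => φY y' * δ c (Sum.inr y') b) (Finset.mem_univ y))
            simp only [h2, mul_one]
            exact le_rfl
        calc phiStar φY (w.map Sum.inr : List (X ⊕ Y)) * φY y
              * (dstar δ a (w.map Sum.inr) c * δ c (Sum.inr y) b)
            = phiStar φY (w.map Sum.inr : List (X ⊕ Y)) * φY y := by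
              rw [h1, h2, one_mul, mul_one]
          _ ≤ _ := mul_le_mul4 hP hy
      · rw [h2]; simp [LMonoid.mul_bot]
    · rw [h1]; simp [LMonoid.mul_bot, LMonoid.bot_mul]

lemma rpow_le_RA [Nonempty A] (k : ℕ) (a b : A) :
    rpow (Rstep φY δ) k a b ≤ RA φY δ a b := by
  have hrefl : ∀ c, Rstep φY δ c c = 1 := rstep_refl φY δ
  obtain ⟨m, hm⟩ : ∃ m, Fintype.card A = m + 1 :=
    ⟨_, (Nat.succ_pred_eq_of_pos Fintype.card_pos).symm⟩
  have hm' : Fintype.card A - 1 = m := by omega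
  show rpow (Rstep φY δ) k a b ≤ rpow (Rstep φY δ) (Fintype.card A) a b
  rw [hm, rpow_eq_pathSup]
  cases k with
  | zero =>
    have h0 : rpow (Rstep φY δ) 0 a b ≤ Rstep φY δ a b := by
      rw [rpow_zero']
      by_cases hab : a = b
      · subst hab; rw [rstep_refl, if_pos rfl]
      · rw [if_neg hab]; exact bot_le
    exact h0.trans (hm' ▸ pathVal_le_pathSup_card hrefl [] a b)
  | succ k =>
    rw [rpow_eq_pathSup]
    have := mul_pathSup_mul_le (R := Rstep φY δ)
      (u := pathSup (Rstep φY δ) m a b) k a b 1 1 (fun cs => by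
        rw [one_mul, mul_one]
        exact hm' ▸ pathVal_le_pathSup_card hrefl cs a b)
    simpa using this

lemma phiStar_dstar_le_RA (hδ : ∀ a z b, δ a z b = 1 ∨ δ a z b = ⊥)
    (w : List Y) (a b : A) :
    phiStar φY (w.map Sum.inr : List (X ⊕ Y)) * dstar δ a (w.map Sum.inr) b
      ≤ RA φY δ a b := by
  have : Nonempty A := ⟨a⟩
  exact (phiStar_dstar_le_rpow φY δ hδ w a b).trans (rpow_le_RA φY δ _ a b)

lemma pathVal_bound (hδ : ∀ a z b, δ a z b = 1 ∨ δ a z b = ⊥) {b : A} {r u : L} :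
    ∀ (cs : List A) (a : A) (e : L),
      (∀ w : List Y,
        e * (phiStar φY (w.map Sum.inr : List (X ⊕ Y)) * dstar δ a (w.map Sum.inr) b) * r ≤ u) →
      e * pathVal (Rstep φY δ) a cs b * r ≤ u := by
  intro cs
  induction cs with
  | nil =>
    intro a e h
    show e * Rstep φY δ a b * r ≤ u
    by_cases hab : a = b
    · subst hab
      rw [rstep_refl]
      have := h []
      simpa [phiStar_nil, dstar_nil] using this
    · rw [rstep_ne φY δ hab, mul_supFin, supFin_mul]
      refine Finset.sup_le fun y _ => ?_
      have := h [y]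
      simpa [phiStar_single_inr, dstar_single, mul_assoc] using this
  | cons c cs ih =>
    intro a e h
    show e * (Rstep φY δ a c * pathVal (Rstep φY δ) c cs b) * r ≤ u
    have key : ∀ w : List Y,
        (e * Rstep φY δ a c) *
          (phiStar φY (w.map Sum.inr : List (X ⊕ Y)) * dstar δ c (w.map Sum.inr) b) * r ≤ u := by
      intro w
      by_cases hac : a = c
      · subst hac
        rw [rstep_refl, mul_one]
        exact h w
      · rw [rstep_ne φY δ hac, mul_supFin, supFin_mul, supFin_mul]
        refine Finset.sup_le fun y _ => ?_
        rcases hδ a (Sum.inr y) c with hd | hd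
        · have hD : dstar δ c (w.map Sum.inr) b
              ≤ Finset.univ.sup fun d => δ a (Sum.inr y) d * dstar δ d (w.map Sum.inr) b := by
            refine le_trans ?_ (Finset.le_sup
              (f := fun d => δ a (Sum.inr y) d * dstar δ d (w.map Sum.inr) b)
              (Finset.mem_univ c))
            simp only [hd, one_mul]
            exact le_rfl
          have hcore : φY y * (phiStar φY (w.map Sum.inr : List (X ⊕ Y))
                * dstar δ c (w.map Sum.inr) b)
              ≤ (φY y * phiStar φY (w.map Sum.inr : List (X ⊕ Y))) *
                Finset.univ.sup fun d => δ a (Sum.inr y) d * dstar δ d (w.map Sum.inr) b := by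
            rw [← mul_assoc]
            exact mul_le_mul_right'' hD _
          have h2 := h (y :: w)
          rw [List.map_cons, phiStar_cons_inr, dstar_cons] at h2
          calc (e * (φY y * δ a (Sum.inr y) c)) *
                (phiStar φY (w.map Sum.inr : List (X ⊕ Y)) * dstar δ c (w.map Sum.inr) b) * r
              = e * (φY y * (phiStar φY (w.map Sum.inr : List (X ⊕ Y))
                  * dstar δ c (w.map Sum.inr) b)) * r := by
                rw [hd, mul_one, mul_assoc e (φY y)]
            _ ≤ e * ((φY y * phiStar φY (w.map Sum.inr : List (X ⊕ Y))) *
                  Finset.univ.sup fun d => δ a (Sum.inr y) d * dstar δ d (w.map Sum.inr) b) * r :=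
                mul_le_mul_left'' (mul_le_mul_right'' hcore e) r
            _ ≤ u := h2
        · rw [hd]
          simp [LMonoid.mul_bot, LMonoid.bot_mul]
    have := ih c (e * Rstep φY δ a c) key
    simpa [mul_assoc] using this

lemma RA_le_of2 (hδ : ∀ a z b, δ a z b = 1 ∨ δ a z b = ⊥) (a b : A) (e r u : L)
    (h : ∀ w : List Y,
      e * (phiStar φY (w.map Sum.inr : List (X ⊕ Y)) * dstar δ a (w.map Sum.inr) b) * r ≤ u) :
    e * RA φY δ a b * r ≤ u := by
  have : Nonempty A := ⟨a⟩
  obtain ⟨m, hm⟩ : ∃ m, Fintype.card A = m + 1 :=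
    ⟨_, (Nat.succ_pred_eq_of_pos Fintype.card_pos).symm⟩
  show e * rpow (Rstep φY δ) (Fintype.card A) a b * r ≤ u
  rw [hm, rpow_eq_pathSup]
  exact mul_pathSup_mul_le m a b e r (fun cs => pathVal_bound φY δ hδ cs a e h)

end Main

end FzAux
end

open Fz in
/-- **Theorem 4 of the paper.** Let `L` be an integral ℓ-monoid, `α` a
fuzzy regular expression over a finite alphabet `X` with associated alphabet `Y`,
`A = (A, X∪Y, δ, a₀, τ)` an arbitrary nondeterministic finite automaton recognizing
`‖α_R‖`, and `A_α` the fuzzy automaton associated with `A` and `α` (its transitions `δα`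
and terminal fuzzy set `τα` are the indicated least upper bounds).  Then
`δ^{A_α}_x = R_A ∘ δ_x ∘ R_A` for every `x ∈ X`, and `τ^{A_α} = R_A ∘ τ`. -/
theorem stmt10 {L X Y A : Type*} [IntegralLMonoid L] [Fintype X] [Fintype Y] [Fintype A]
    (α : FRE X L) (sc : L → Y) (φY : Y → L)
    (hsc : Set.BijOn sc α.scalars (Set.univ : Set Y))
    (hφY : ∀ l ∈ α.scalars, φY (sc l) = l)
    (δ : A → X ⊕ Y → A → L) (a0 : A) (τ : A → L)
    (hδ : ∀ a z b, δ a z b = 1 ∨ δ a z b = ⊥)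
    (hτ : ∀ a, τ a = 1 ∨ τ a = ⊥)
    (hrec : ∀ v : List (X ⊕ Y), lang δ a0 τ v = langR sc α v)
    (δα : A → X → A → L) (τα : A → L)
    (hδα : ∀ (a : A) (x : X) (b : A), IsLUB (dset φY δ a x b) (δα a x b))
    (hτα : ∀ a : A, IsLUB (tset φY δ τ a) (τα a)) :
    (∀ (x : X) (a b : A),
      δα a x b = fcomp (fcomp (RA φY δ) (fun p q => δ p (Sum.inl x) q)) (RA φY δ) a b) ∧
    (∀ a : A, τα a = fcompf (RA φY δ) τ a) := by
  constructor
  · intro x a b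
    have hne : Nonempty A := ⟨a⟩
    apply le_antisymm
    · refine (hδα a x b).2 ?_
      rintro l ⟨v, hv, rfl⟩
      obtain ⟨w₁, w₂, rfl⟩ := FzAux.mem_UY_singleton.mp hv
      rw [FzAux.phiStar_append, FzAux.phiStar_cons_inl, FzAux.dstar_append, FzAux.mul_supFin]
      refine Finset.sup_le fun c _ => ?_
      rw [FzAux.dstar_cons, FzAux.mul_supFin, FzAux.mul_supFin]
      refine Finset.sup_le fun d _ => ?_
      have hRHS : (RA φY δ a c * δ c (Sum.inl x) d) * RA φY δ d b
          ≤ fcomp (fcomp (RA φY δ) (fun p q => δ p (Sum.inl x) q)) (RA φY δ) a b := by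
        refine le_trans ?_ (Finset.le_sup
          (f := fun d' => fcomp (RA φY δ) (fun p q => δ p (Sum.inl x) q) a d' * RA φY δ d' b)
          (Finset.mem_univ d))
        refine FzAux.mul_le_mul_left'' ?_ _
        exact Finset.le_sup
          (f := fun c' => RA φY δ a c' * δ c' (Sum.inl x) d) (Finset.mem_univ c)
      refine le_trans ?_ hRHS
      rcases FzAux.crisp_dstar hδ a (w₁.map Sum.inr) c with h1 | h1
      · rcases hδ c (Sum.inl x) d with h2 | h2
        · rcases FzAux.crisp_dstar hδ d (w₂.map Sum.inr) b with h3 | h3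
          · have hP1 : phiStar φY (w₁.map Sum.inr : List (X ⊕ Y)) ≤ RA φY δ a c := by
              have := FzAux.phiStar_dstar_le_RA φY δ hδ w₁ a c
              rwa [h1, mul_one] at this
            have hP2 : phiStar φY (w₂.map Sum.inr : List (X ⊕ Y)) ≤ RA φY δ d b := by
              have := FzAux.phiStar_dstar_le_RA φY δ hδ w₂ d b
              rwa [h3, mul_one] at this
            calc phiStar φY (w₁.map Sum.inr : List (X ⊕ Y)) *
                  phiStar φY (w₂.map Sum.inr : List (X ⊕ Y)) *
                  (dstar δ a (w₁.map Sum.inr) c * (δ c (Sum.inl x) d * dstar δ d (w₂.map Sum.inr) b))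
                = phiStar φY (w₁.map Sum.inr : List (X ⊕ Y)) *
                  phiStar φY (w₂.map Sum.inr : List (X ⊕ Y)) := by
                  rw [h1, h2, h3, one_mul, one_mul, mul_one]
              _ ≤ RA φY δ a c * RA φY δ d b := FzAux.mul_le_mul4 hP1 hP2
              _ = (RA φY δ a c * δ c (Sum.inl x) d) * RA φY δ d b := by rw [h2, mul_one]
          · rw [h3]; simp [LMonoid.mul_bot]
        · rw [h2]; simp [LMonoid.mul_bot, LMonoid.bot_mul]
      · rw [h1]; simp [LMonoid.mul_bot, LMonoid.bot_mul]
    · show (Finset.univ.sup fun d =>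
          fcomp (RA φY δ) (fun p q => δ p (Sum.inl x) q) a d * RA φY δ d b) ≤ δα a x b
      refine Finset.sup_le fun d _ => ?_
      show (Finset.univ.sup fun c => RA φY δ a c * δ c (Sum.inl x) d) * RA φY δ d b ≤ δα a x b
      rw [FzAux.supFin_mul]
      refine Finset.sup_le fun c _ => ?_
      have key2 : ∀ w₁ : List Y,
          (1 : L) * (phiStar φY (w₁.map Sum.inr : List (X ⊕ Y)) * dstar δ a (w₁.map Sum.inr) c) *
            (δ c (Sum.inl x) d * RA φY δ d b) ≤ δα a x b := by
        intro w₁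
        rw [one_mul, ← mul_assoc]
        have key3 : ∀ w₂ : List Y,
            ((phiStar φY (w₁.map Sum.inr : List (X ⊕ Y)) * dstar δ a (w₁.map Sum.inr) c) *
              δ c (Sum.inl x) d) *
              (phiStar φY (w₂.map Sum.inr : List (X ⊕ Y)) * dstar δ d (w₂.map Sum.inr) b) *
              (1 : L) ≤ δα a x b := by
          intro w₂
          rw [mul_one]
          have hv : (w₁.map Sum.inr ++ Sum.inl x :: w₂.map Sum.inr) ∈ UY Y [x] :=
            FzAux.mem_UY_singleton.mpr ⟨w₁, w₂, rfl⟩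
          have hub := (hδα a x b).1 ⟨_, hv, rfl⟩
          refine le_trans ?_ hub
          rw [FzAux.phiStar_append, FzAux.phiStar_cons_inl, FzAux.dstar_append]
          rcases FzAux.crisp_dstar hδ a (w₁.map Sum.inr) c with h1 | h1
          · rcases hδ c (Sum.inl x) d with h2 | h2
            · rcases FzAux.crisp_dstar hδ d (w₂.map Sum.inr) b with h3 | h3
              · have hone : (1 : L) ≤ Finset.univ.sup fun c' =>
                    dstar δ a (w₁.map Sum.inr) c' * dstar δ c' (Sum.inl x :: w₂.map Sum.inr) b := by
                  refine le_trans ?_ (Finset.le_sup (f := fun c' =>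
                    dstar δ a (w₁.map Sum.inr) c' * dstar δ c' (Sum.inl x :: w₂.map Sum.inr) b)
                    (Finset.mem_univ c))
                  simp only [h1, one_mul]
                  rw [FzAux.dstar_cons]
                  refine le_trans ?_ (Finset.le_sup (f := fun d' =>
                    δ c (Sum.inl x) d' * dstar δ d' (w₂.map Sum.inr) b) (Finset.mem_univ d))
                  simp only [h2, h3, one_mul]
                  exact le_rfl
                calc ((phiStar φY (w₁.map Sum.inr : List (X ⊕ Y)) * dstar δ a (w₁.map Sum.inr) c) *
                      δ c (Sum.inl x) d) *
                      (phiStar φY (w₂.map Sum.inr : List (X ⊕ Y)) * dstar δ d (w₂.map Sum.inr) b)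
                    = (phiStar φY (w₁.map Sum.inr : List (X ⊕ Y)) *
                        phiStar φY (w₂.map Sum.inr : List (X ⊕ Y))) * 1 := by
                      rw [h1, h2, h3, mul_one, mul_one, mul_one, mul_one]
                  _ ≤ (phiStar φY (w₁.map Sum.inr : List (X ⊕ Y)) *
                        phiStar φY (w₂.map Sum.inr : List (X ⊕ Y))) *
                      Finset.univ.sup fun c' => dstar δ a (w₁.map Sum.inr) c' *
                        dstar δ c' (Sum.inl x :: w₂.map Sum.inr) b :=
                    FzAux.mul_le_mul_right'' hone _
              · rw [h3]; simp [LMonoid.mul_bot]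
            · rw [h2]; simp [LMonoid.mul_bot, LMonoid.bot_mul]
          · rw [h1]; simp [LMonoid.mul_bot, LMonoid.bot_mul]
        have := FzAux.RA_le_of2 φY δ hδ d b _ 1 _ key3
        simpa using this
      have := FzAux.RA_le_of2 φY δ hδ a c 1 (δ c (Sum.inl x) d * RA φY δ d b) _ key2
      rw [mul_assoc]
      simpa using this
  · intro a
    have hne : Nonempty A := ⟨a⟩
    apply le_antisymm
    · refine (hτα a).2 ?_
      rintro l ⟨w, rfl⟩
      refine Finset.sup_le fun b _ => ?_
      refine le_trans ?_ (Finset.le_sup (f := fun b' => RA φY δ a b' * τ b') (Finset.mem_univ b))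
      exact FzAux.mul_le_mul_left'' (FzAux.phiStar_dstar_le_RA φY δ hδ w a b) (τ b)
    · show (Finset.univ.sup fun b => RA φY δ a b * τ b) ≤ τα a
      refine Finset.sup_le fun b _ => ?_
      have key : ∀ w : List Y,
          (1 : L) * (phiStar φY (w.map Sum.inr : List (X ⊕ Y)) * dstar δ a (w.map Sum.inr) b) *
            τ b ≤ τα a := by
        intro w
        rw [one_mul]
        have hel := (hτα a).1 ⟨w, rfl⟩
        refine le_trans ?_ hel
        exact Finset.le_sup (f := fun b' =>
          phiStar φY ((w.map Sum.inr : List (X ⊕ Y))) * dstar δ a (w.map Sum.inr) b' * τ b')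
          (Finset.mem_univ b)
      have := FzAux.RA_le_of2 φY δ hδ a b 1 (τ b) _ key
      simpa using this
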